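/- Fix 1 ≤ q < n and a compact set K ⊂ ℝ^n. For all t > 0, if q > 1 then t·E_K(t) ≥ c_{q-1} V_{q-1}(K), where E_K(t) is the strip energy with Neumann kernel G_t, V_{q-1}(K) is the Riesz (q-1)-energy, and c_{q-1} = Γ(1/2)Γ((q-1)/2)/(2Γ(q/2)). -/
import Mathlib


open Real MeasureTheory ENNReal
open Set

/-- The Neumann strip kernel on the central hyperplane, as an extended-nonnegative-real-valued
kernel: `G_t(x,y) = ∑_{j∈ℤ}(|x-y|² + (2tj)²)^{-q/2}` (value `∞` on the diagonal). -/
noncomputable def stripKernel (n : ℕ) (q t : ℝ) (x y : EuclideanSpace ℝ (Fin n)) : ℝ≥0∞ :=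
  ∑' j : ℤ, ENNReal.ofReal (‖x - y‖ ^ 2 + (2 * t * j) ^ 2) ^ (-q / 2)

/-- The energy of a compact set `K` with respect to a kernel `k`: the infimum over all
probability measures supported on `K` of the double integral of the kernel. -/
noncomputable def kernelEnergy {n : ℕ} (K : Set (EuclideanSpace ℝ (Fin n)))
    (k : EuclideanSpace ℝ (Fin n) → EuclideanSpace ℝ (Fin n) → ℝ≥0∞) : ℝ≥0∞ :=
  ⨅ (μ : Measure (EuclideanSpace ℝ (Fin n))) (_ : IsProbabilityMeasure μ) (_ : μ Kᶜ = 0),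
    ∫⁻ x, ∫⁻ y, k x y ∂μ ∂μ

/-- The Riesz `p`-energy `V_p(K)` (kernel `|x-y|^{-p}`, value `∞` on the diagonal). -/
noncomputable def rieszEnergy (n : ℕ) (p : ℝ) (K : Set (EuclideanSpace ℝ (Fin n))) : ℝ≥0∞ :=
  kernelEnergy K fun x y => ENNReal.ofReal ‖x - y‖ ^ (-p)


lemma gauss_summable {b : ℝ} (hb : 0 < b) :
    Summable fun j : ℤ => Real.exp (-(b * (j : ℝ) ^ 2)) := by
  have key : Summable fun n : ℕ => Real.exp (-(b * (n : ℝ) ^ 2)) := by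
    refine Summable.of_nonneg_of_le (fun n => (Real.exp_pos _).le)
      (fun n => ?_) (summable_geometric_of_lt_one (Real.exp_pos (-b)).le
        (Real.exp_lt_one_iff.mpr (neg_neg_iff_pos.mpr hb)))
    rw [← Real.exp_nat_mul]
    apply Real.exp_le_exp.mpr
    have hn : (n : ℝ) ≤ (n : ℝ) ^ 2 := by
      have := Nat.le_self_pow (two_ne_zero) n
      exact_mod_cast this
    nlinarith
  apply Summable.of_nat_of_neg <;> simpa using key

lemma theta_lower {b : ℝ} (hb : 0 < b) :
    Real.sqrt π / Real.sqrt b ≤ ∑' j : ℤ, Real.exp (-(b * (j : ℝ) ^ 2)) := by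
  have hπ := Real.pi_pos
  have hbπ : 0 < b / π := div_pos hb hπ
  have h := Real.tsum_exp_neg_mul_int_sq hbπ
  have h1 : ∀ n : ℤ, -π * (b / π) * (n : ℝ) ^ 2 = -(b * (n : ℝ) ^ 2) := by
    intro n; field_simp
  simp_rw [h1] at h
  rw [h]
  have hT : (1 : ℝ) ≤ ∑' n : ℤ, Real.exp (-π / (b / π) * (n : ℝ) ^ 2) := by
    have hs : Summable fun n : ℤ => Real.exp (-π / (b / π) * (n : ℝ) ^ 2) := by
      have h2 : ∀ n : ℤ, -π / (b / π) * (n : ℝ) ^ 2 = -((π ^ 2 / b) * (n : ℝ) ^ 2) := by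
        intro n; rw [div_div_eq_mul_div]; ring
      simp_rw [h2]
      exact gauss_summable (by positivity)
    have := Summable.le_tsum hs 0 (fun j _ => (Real.exp_pos _).le)
    simpa using this
  have hc : Real.sqrt π / Real.sqrt b = 1 / (b / π) ^ ((1:ℝ)/2) := by
    rw [← Real.sqrt_eq_rpow, Real.sqrt_div hb.le, one_div, inv_div]
  rw [hc]
  nlinarith [mul_le_mul_of_nonneg_left hT (le_of_lt (by positivity :
    (0:ℝ) < 1 / (b / π) ^ ((1:ℝ)/2)))]

lemma integrableOn_gamma_rate {a R : ℝ} (ha : 0 < a) (hR : 0 < R) :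
    IntegrableOn (fun x : ℝ => x ^ (a - 1) * Real.exp (-(R * x))) (Ioi 0) := by
  have h0 : IntegrableOn (fun x : ℝ => Real.exp (-x) * x ^ (a - 1)) (Ioi 0) :=
    Real.GammaIntegral_convergent ha
  have h1 : IntegrableOn (fun x : ℝ => Real.exp (-(R * x)) * (R * x) ^ (a - 1)) (Ioi 0) := by
    have := (integrableOn_Ioi_comp_mul_left_iff
      (fun x : ℝ => Real.exp (-x) * x ^ (a - 1)) 0 hR).mpr (by simpa using h0)
    simpa using this
  have h2 := h1.const_mul ((R : ℝ) ^ (a - 1))⁻¹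
  apply MeasureTheory.IntegrableOn.congr_fun h2 ?_ measurableSet_Ioi
  intro x hx
  dsimp only
  rw [Real.mul_rpow hR.le (le_of_lt hx)]
  field_simp [(Real.rpow_pos_of_pos hR (a-1)).ne']

lemma lintegral_gamma_rate {a R : ℝ} (ha : 0 < a) (hR : 0 < R) :
    ∫⁻ x in Ioi (0:ℝ), ENNReal.ofReal (x ^ (a - 1) * Real.exp (-(R * x)))
      = ENNReal.ofReal ((1 / R) ^ a * Real.Gamma a) := by
  rw [← Real.integral_rpow_mul_exp_neg_mul_Ioi ha hR,
    ← ofReal_integral_eq_lintegral_ofReal (integrableOn_gamma_rate ha hR)]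
  filter_upwards [ae_restrict_mem measurableSet_Ioi] with x hx
  have : (0:ℝ) < x := hx
  positivity

lemma kernel_pointwise {q t r : ℝ} (hq : 1 < q) (ht : 0 < t) (hr : 0 ≤ r) :
    ENNReal.ofReal (Real.Gamma (1/2) * Real.Gamma ((q-1)/2) / (2 * Real.Gamma (q/2)))
      * ENNReal.ofReal r ^ (-(q-1))
    ≤ ENNReal.ofReal t *
        ∑' j : ℤ, ENNReal.ofReal (r ^ 2 + (2 * t * (j:ℝ)) ^ 2) ^ (-q / 2) := by
  have hq2 : 0 < q / 2 := by linarith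
  have hq12 : 0 < (q - 1) / 2 := by linarith
  have hΓq : 0 < Real.Gamma (q/2) := Real.Gamma_pos_of_pos hq2
  have hΓq1 : 0 < Real.Gamma ((q-1)/2) := Real.Gamma_pos_of_pos hq12
  rcases eq_or_lt_of_le hr with hr0 | hr0
  · -- diagonal case : both sides are ⊤
    have hterm : ENNReal.ofReal (r ^ 2 + (2 * t * ((0:ℤ):ℝ)) ^ 2) ^ (-q / 2) = ⊤ := by
      simp only [Int.cast_zero, mul_zero, ← hr0]
      rw [show ((0:ℝ)^2 + (0:ℝ)^2) = 0 by norm_num, ENNReal.ofReal_zero]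
      exact ENNReal.zero_rpow_of_neg (by linarith)
    have htsum : (∑' j : ℤ, ENNReal.ofReal (r ^ 2 + (2 * t * (j:ℝ)) ^ 2) ^ (-q / 2)) = ⊤ :=
      top_le_iff.mp (hterm ▸ ENNReal.le_tsum 0)
    rw [htsum, ENNReal.mul_top (by simpa using ht)]
    exact le_top
  -- main case r > 0
  set A : ℤ → ℝ := fun j => r ^ 2 + (2 * t * (j:ℝ)) ^ 2 with hA
  have hApos : ∀ j, 0 < A j := fun j => by positivity
  set SS : ℝ≥0∞ := ∑' j : ℤ, ENNReal.ofReal (A j) ^ (-q / 2) with hSS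
  -- Step B : Gamma representation
  have stepB : ENNReal.ofReal (Real.Gamma (q/2)) * SS
      = ∫⁻ x in Set.Ioi (0:ℝ), ∑' j : ℤ,
          ENNReal.ofReal (x ^ (q/2 - 1) * Real.exp (-(A j * x))) := by
    rw [lintegral_tsum (fun j => (Measurable.ennreal_ofReal (by fun_prop)).aemeasurable)]
    rw [hSS, ← ENNReal.tsum_mul_left]
    congr 1
    ext j
    rw [lintegral_gamma_rate hq2 (hApos j)]
    rw [ENNReal.ofReal_rpow_of_pos (hApos j), ← ENNReal.ofReal_mul hΓq.le]
    congr 1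
    rw [one_div, Real.inv_rpow (hApos j).le, ← Real.rpow_neg (hApos j).le, neg_div]
    ring
  -- Step C : pointwise theta bound inside the integral
  have stepC : ∀ x : ℝ, x ∈ Set.Ioi (0:ℝ) →
      ENNReal.ofReal (Real.sqrt π / (2*t)) *
        ENNReal.ofReal (x ^ ((q-1)/2 - 1) * Real.exp (-(r^2 * x)))
      ≤ ∑' j : ℤ, ENNReal.ofReal (x ^ (q/2 - 1) * Real.exp (-(A j * x))) := by
    intro x hx
    have hx0 : (0:ℝ) < x := hx
    have hb : 0 < 4 * t^2 * x := by positivity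
    have hAx : ∀ j : ℤ, A j * x = r^2 * x + (4 * t^2 * x) * (j:ℝ)^2 := by
      intro j; rw [hA]; ring
    have hsplit : ∀ j : ℤ, ENNReal.ofReal (x ^ (q/2 - 1) * Real.exp (-(A j * x)))
        = ENNReal.ofReal (x ^ (q/2 - 1) * Real.exp (-(r^2 * x)))
            * ENNReal.ofReal (Real.exp (-((4 * t^2 * x) * (j:ℝ)^2))) := by
      intro j
      rw [← ENNReal.ofReal_mul (by positivity)]
      congr 1
      rw [hAx j, neg_add, Real.exp_add]
      ring
    calc ENNReal.ofReal (Real.sqrt π / (2*t)) *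
          ENNReal.ofReal (x ^ ((q-1)/2 - 1) * Real.exp (-(r^2 * x)))
        = ENNReal.ofReal (x ^ (q/2 - 1) * Real.exp (-(r^2 * x)))
            * ENNReal.ofReal (Real.sqrt π / Real.sqrt (4 * t^2 * x)) := by
          rw [← ENNReal.ofReal_mul (by positivity), ← ENNReal.ofReal_mul (by positivity)]
          congr 1
          have h4 : Real.sqrt (4 * t^2 * x) = 2 * t * Real.sqrt x := by
            rw [show 4 * t^2 * x = (2*t)^2 * x by ring,
              Real.sqrt_mul (by positivity), Real.sqrt_sq (by positivity)]
          rw [h4, Real.sqrt_eq_rpow x,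
            show (q-1)/2 - 1 = (q/2 - 1) + (-(1/2) : ℝ) by ring,
            Real.rpow_add hx0, Real.rpow_neg hx0.le]
          have hxhalf : (0:ℝ) < x ^ ((1:ℝ)/2) := Real.rpow_pos_of_pos hx0 _
          field_simp
      _ ≤ ENNReal.ofReal (x ^ (q/2 - 1) * Real.exp (-(r^2 * x)))
            * ∑' j : ℤ, ENNReal.ofReal (Real.exp (-((4 * t^2 * x) * (j:ℝ)^2))) := by
          apply mul_le_mul_right
          rw [← ENNReal.ofReal_tsum_of_nonneg (fun j => (Real.exp_pos _).le)
            (gauss_summable hb)]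
          exact ENNReal.ofReal_le_ofReal (theta_lower hb)
      _ = ∑' j : ℤ, ENNReal.ofReal (x ^ (q/2 - 1) * Real.exp (-(A j * x))) := by
          rw [← ENNReal.tsum_mul_left]
          exact tsum_congr (fun j => (hsplit j).symm)
  -- Step D : integrate
  have stepD : ENNReal.ofReal (Real.sqrt π / (2*t)) *
      ENNReal.ofReal ((1 / r^2) ^ ((q-1)/2) * Real.Gamma ((q-1)/2))
      ≤ ENNReal.ofReal (Real.Gamma (q/2)) * SS := by
    rw [stepB, ← lintegral_gamma_rate hq12 (by positivity : (0:ℝ) < r^2),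
      ← lintegral_const_mul' _ _ ENNReal.ofReal_ne_top]
    exact setLIntegral_mono' measurableSet_Ioi stepC
  -- Step E : conclude
  have hrpow : ENNReal.ofReal r ^ (-(q-1)) = ENNReal.ofReal (r ^ (-(q-1))) :=
    ENNReal.ofReal_rpow_of_pos hr0
  have hr2 : (1 / r^2) ^ ((q-1)/2) = r ^ (-(q-1)) := by
    rw [one_div, ← Real.rpow_natCast r 2, ← Real.rpow_neg_one, ← Real.rpow_mul hr0.le,
      ← Real.rpow_mul hr0.le]
    norm_num
    congr 1
    ring
  rw [← ENNReal.mul_le_mul_iff_right (a := ENNReal.ofReal (Real.Gamma (q/2)))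
    (by simpa using hΓq) ENNReal.ofReal_ne_top]
  calc ENNReal.ofReal (Real.Gamma (q/2)) *
        (ENNReal.ofReal (Real.Gamma (1/2) * Real.Gamma ((q-1)/2) / (2 * Real.Gamma (q/2)))
          * ENNReal.ofReal r ^ (-(q-1)))
      = ENNReal.ofReal (Real.sqrt π / (2*t)) *
          ENNReal.ofReal ((1 / r^2) ^ ((q-1)/2) * Real.Gamma ((q-1)/2)) *
          ENNReal.ofReal t := by
        rw [hrpow, ← ENNReal.ofReal_mul (by positivity), ← ENNReal.ofReal_mul hΓq.le,
          ← ENNReal.ofReal_mul (by positivity), ← ENNReal.ofReal_mul (by positivity)]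
        congr 1
        rw [hr2, Real.Gamma_one_half_eq]
        field_simp
    _ ≤ ENNReal.ofReal (Real.Gamma (q/2)) * SS * ENNReal.ofReal t := by
        exact mul_le_mul_left stepD _
    _ = ENNReal.ofReal (Real.Gamma (q/2)) * (ENNReal.ofReal t * SS) := by ring

/-- For `1 < q < n`, `K ⊂ ℝⁿ` compact, and all `t > 0`:
`t·E_K(t) ≥ c_{q-1} V_{q-1}(K)` with `c_{q-1} = Γ(1/2)Γ((q-1)/2)/(2Γ(q/2))`. -/
theorem stmt_16 (n : ℕ) (q : ℝ) (hq1 : 1 ≤ q) (hq : 1 < q) (hqn : q < n)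
    (K : Set (EuclideanSpace ℝ (Fin n))) (hK : IsCompact K) (t : ℝ) (ht : 0 < t) :
    ENNReal.ofReal (Real.Gamma (1 / 2) * Real.Gamma ((q - 1) / 2) /
        (2 * Real.Gamma (q / 2))) * rieszEnergy n (q - 1) K ≤
      ENNReal.ofReal t * kernelEnergy K (stripKernel n q t) := by
  set c : ℝ≥0∞ := ENNReal.ofReal (Real.Gamma (1 / 2) * Real.Gamma ((q - 1) / 2) /
      (2 * Real.Gamma (q / 2))) with hc
  rw [rieszEnergy, kernelEnergy, kernelEnergy]
  simp_rw [ENNReal.mul_iInf_of_ne (by simpa using ht) ENNReal.ofReal_ne_top]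
  refine le_iInf fun μ => le_iInf fun hμ => le_iInf fun hμK => ?_
  have step1 : c * ⨅ (μ' : Measure (EuclideanSpace ℝ (Fin n))) (_ : IsProbabilityMeasure μ')
        (_ : μ' Kᶜ = 0), ∫⁻ x, ∫⁻ y, ENNReal.ofReal ‖x - y‖ ^ (-(q-1)) ∂μ' ∂μ'
      ≤ c * ∫⁻ x, ∫⁻ y, ENNReal.ofReal ‖x - y‖ ^ (-(q-1)) ∂μ ∂μ :=
    mul_le_mul_right (iInf_le_of_le μ (iInf_le_of_le hμ (iInf_le _ hμK))) _
  refine step1.trans ?_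
  rw [← lintegral_const_mul' _ _ ENNReal.ofReal_ne_top,
    ← lintegral_const_mul' (ENNReal.ofReal t) _ ENNReal.ofReal_ne_top]
  calc ∫⁻ x, c * ∫⁻ y, ENNReal.ofReal ‖x - y‖ ^ (-(q-1)) ∂μ ∂μ
      = ∫⁻ x, ∫⁻ y, c * ENNReal.ofReal ‖x - y‖ ^ (-(q-1)) ∂μ ∂μ := by
        congr 1; ext x
        exact (lintegral_const_mul' _ _ ENNReal.ofReal_ne_top).symm
    _ ≤ ∫⁻ x, ∫⁻ y, ENNReal.ofReal t * stripKernel n q t x y ∂μ ∂μ := by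
        refine lintegral_mono fun x => lintegral_mono fun y => ?_
        exact kernel_pointwise hq ht (norm_nonneg _)
    _ = ∫⁻ x, ENNReal.ofReal t * ∫⁻ y, stripKernel n q t x y ∂μ ∂μ := by
        congr 1; ext x
        exact lintegral_const_mul' _ _ ENNReal.ofReal_ne_top
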